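/- Let PM : ℝ^d × ℝ^d → ℝ^{2d} be the Prony mapping, PM(A, X) = (m_0(F_{A,X}), ..., m_{2d−1}(F_{A,X})) with m_k(F_{A,X}) = ∑_{j=1}^d a_j x_j^k, and let (A^0, X^0) be a point with nodes X^0 ⊂ [−1/2, 1/2] pairwise separated by at least ρ > 0 and amplitudes satisfying 0 < m ≤ |a^0_j| ≤ M. Let L = {(0, ..., 0, t) : t ∈ ℝ} ⊂ ℝ^{2d} be the last coordinate axis. Then the preimage line JPM^{−1}(L) of L under the Jacobian JPM = D PM(A^0, X^0) is not contained in the amplitude subspace ℝ^d × {0} ⊂ ℝ^d × ℝ^d; moreover, the angle that the line JPM^{−1}(L) forms with the subspace ℝ^d × {0} is bounded from below by a positive constant depending only on m, M, d, ρ. -/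

import Mathlib

/-- The Prony mapping `PM : ℝ^d × ℝ^d → ℝ^{2d}`,
`PM(A, X) = (m_0(F_{A,X}), …, m_{2d−1}(F_{A,X}))` with
`m_k(F_{A,X}) = ∑ j, A j · (X j)^k`.  The domain carries the Euclidean (`L²`)
norm via `WithLp 2`. -/
noncomputable def Prony (d : ℕ)
    (p : WithLp 2 (EuclideanSpace ℝ (Fin d) × EuclideanSpace ℝ (Fin d))) :
    EuclideanSpace ℝ (Fin (2 * d)) :=
  WithLp.toLp 2 fun k : Fin (2 * d) =>
    ∑ j, (WithLp.equiv 2 _ p).1 j * ((WithLp.equiv 2 _ p).2 j) ^ (k : ℕ)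

/-! Fix admissible parameters `(A, X)`. If `v = (v_A, 0)` satisfies `J v ∈ L`, the first `d`
moments `∑ v_A j X_j ^ k` vanish, so `v_A = 0` because the Vandermonde matrix of the distinct
nodes is invertible. Hence `‖v_X‖` is positive on the unit sphere of `J⁻¹ L`. The admissible
parameters (nodes in `[-1/2, 1/2]`, `ρ`-separated, `|a_j| ≤ M`) form a compact set on which the
Jacobian depends continuously, so `‖v_X‖ / ‖v‖` has a positive lower bound there. -/

theorem IsCompact.exists_pos_forall_mul_norm_le {X E F G : Type*} [TopologicalSpace X]
    [NormedAddCommGroup E] [NormedSpace ℝ E] [FiniteDimensional ℝ E]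
    [NormedAddCommGroup F] [NormedSpace ℝ F] [NormedAddCommGroup G] [NormedSpace ℝ G]
    {P : Set X} (hP : IsCompact P) {T : X → E →L[ℝ] F}
    (hT : Continuous fun q : X × E => T q.1 q.2) {L : Submodule ℝ F} (hL : IsClosed (L : Set F))
    (g : E →L[ℝ] G) (hg : ∀ p ∈ P, ∀ v, T p v ∈ L → g v = 0 → v = 0) :
    ∃ ε > 0, ∀ p ∈ P, ∀ v, T p v ∈ L → ε * ‖v‖ ≤ ‖g v‖ := by
  set K := {q ∈ P ×ˢ Metric.sphere (0 : E) 1 | T q.1 q.2 ∈ L}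
  have hK : IsCompact K := (hP.prod (isCompact_sphere 0 1)).inter_right (hL.preimage hT)
  have hpos : ∀ q ∈ K, 0 < ‖g q.2‖ := by
    rintro ⟨p, v⟩ ⟨⟨hp, hv⟩, hTv⟩
    refine norm_pos_iff.mpr fun hgv => ?_
    simp [hg p hp v hTv hgv] at hv
  obtain ⟨ε, hε, hεK⟩ := hK.exists_forall_le' (by fun_prop) hpos
  refine ⟨ε, hε, fun p hp v hTv => ?_⟩
  rcases eq_or_ne v 0 with rfl | hv
  · simp
  have hnv : 0 < ‖v‖ := norm_pos_iff.mpr hv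
  have hunit : (p, ‖v‖⁻¹ • v) ∈ K :=
    ⟨⟨hp, by simp [norm_smul, hnv.ne']⟩, by simpa using L.smul_mem ‖v‖⁻¹ hTv⟩
  have := hεK _ hunit
  rw [map_smul, norm_smul, norm_inv, norm_norm] at this
  rwa [le_inv_mul_iff₀ hnv, mul_comm] at this

theorem injective_of_le_abs_sub {ι : Type*} {x : ι → ℝ} {ρ : ℝ} (hρ : 0 < ρ)
    (hx : ∀ i j, i ≠ j → ρ ≤ |x i - x j|) : Function.Injective x := fun i j hij => by
  by_contra hne
  have := hx i j hne
  rw [hij, sub_self, abs_zero] at this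
  linarith

noncomputable def lastCoordAxis (n : ℕ) : Submodule ℝ (EuclideanSpace ℝ (Fin n)) :=
  ⨅ (k : Fin n) (_ : (k : ℕ) ≠ n - 1),
    LinearMap.ker (EuclideanSpace.proj k : EuclideanSpace ℝ (Fin n) →L[ℝ] ℝ).toLinearMap

theorem mem_lastCoordAxis {n : ℕ} {μ : EuclideanSpace ℝ (Fin n)} :
    μ ∈ lastCoordAxis n ↔ ∀ k : Fin n, (k : ℕ) ≠ n - 1 → μ k = 0 := by
  simp [lastCoordAxis]

namespace Prony

variable {d : ℕ}

local notation "Pt" d => WithLp 2 (EuclideanSpace ℝ (Fin d) × EuclideanSpace ℝ (Fin d))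

noncomputable def ampL (j : Fin d) : (Pt d) →L[ℝ] ℝ :=
  (EuclideanSpace.proj j).comp (WithLp.fstL 2 ℝ _ _)

noncomputable def nodeL (j : Fin d) : (Pt d) →L[ℝ] ℝ :=
  (EuclideanSpace.proj j).comp (WithLp.sndL 2 ℝ _ _)

@[simp] lemma ampL_apply (j : Fin d) (p : Pt d) : ampL j p = p.fst j := rfl

@[simp] lemma nodeL_apply (j : Fin d) (p : Pt d) : nodeL j p = p.snd j := rfl

noncomputable def jacobianRow (p : Pt d) (k : ℕ) : (Pt d) →L[ℝ] ℝ :=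
  ∑ j, (p.snd j ^ k • ampL j + (k * p.fst j * p.snd j ^ (k - 1)) • nodeL j)

noncomputable def jacobian (p : Pt d) : (Pt d) →L[ℝ] EuclideanSpace ℝ (Fin (2 * d)) :=
  (EuclideanSpace.equiv (Fin (2 * d)) ℝ).symm.toContinuousLinearMap.comp
    (ContinuousLinearMap.pi fun k : Fin (2 * d) => jacobianRow p k)

lemma jacobian_apply (p v : Pt d) (k : Fin (2 * d)) :
    jacobian p v k = ∑ j, (v.fst j * p.snd j ^ (k : ℕ)
      + (k : ℕ) * p.fst j * p.snd j ^ ((k : ℕ) - 1) * v.snd j) := by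
  simp [jacobian, jacobianRow, mul_comm]

theorem hasFDerivAt_moment (p : Pt d) (k : ℕ) :
    HasFDerivAt (fun q => ∑ j, ampL j q * nodeL j q ^ k) (jacobianRow p k) p := by
  refine HasFDerivAt.fun_sum fun j _ => ((ampL j).hasFDerivAt.mul
    ((hasDerivAt_pow k (nodeL j p)).comp_hasFDerivAt p (nodeL j).hasFDerivAt)).congr_fderiv ?_
  ext v
  simp
  ring

theorem hasFDerivAt (p : Pt d) : HasFDerivAt (Prony d) (jacobian p) p :=
  (EuclideanSpace.equiv (Fin (2 * d)) ℝ).symm.hasFDerivAt.comp p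
    (hasFDerivAt_pi'' fun k => hasFDerivAt_moment p k)

theorem fderiv_eq_jacobian (p : Pt d) : fderiv ℝ (Prony d) p = jacobian p :=
  -- instance search for this `ContinuousSMul` times out
  have : ContinuousSMul ℝ (Pt d) := IsBoundedSMul.continuousSMul
  (hasFDerivAt p).fderiv

theorem continuous_jacobian_apply :
    Continuous fun q : (Pt d) × (Pt d) => jacobian q.1 q.2 := by
  have hcoord : (fun q : (Pt d) × (Pt d) => jacobian q.1 q.2) = fun q =>
      WithLp.toLp 2 fun k : Fin (2 * d) => ∑ j, (ampL j q.2 * nodeL j q.1 ^ (k : ℕ)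
        + (k : ℕ) * ampL j q.1 * nodeL j q.1 ^ ((k : ℕ) - 1) * nodeL j q.2) := by
    ext q k
    simp [jacobian_apply]
  rw [hcoord]
  exact (PiLp.continuous_toLp 2 _).comp (by fun_prop)

theorem eq_zero_of_jacobian_apply_eq_zero {p v : Pt d} (hX : Function.Injective p.snd.ofLp)
    (hv : ∀ k : Fin (2 * d), (k : ℕ) < d → jacobian p v k = 0) (hvX : v.snd = 0) : v = 0 := by
  have hvA : v.fst.ofLp = 0 := by
    refine Matrix.eq_zero_of_forall_pow_sum_mul_pow_eq_zero hX fun i => ?_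
    simpa [jacobian_apply, hvX] using hv ⟨i, by omega⟩ i.is_lt
  exact WithLp.ofLp_injective 2 (Prod.ext (WithLp.ofLp_injective 2 hvA) hvX)

def separatedConfig (d : ℕ) (M ρ : ℝ) : Set (Pt d) :=
  {p | (∀ j, p.snd j ∈ Set.Icc (-(1 / 2) : ℝ) (1 / 2)) ∧
    (∀ i j, i ≠ j → ρ ≤ |p.snd i - p.snd j|) ∧ ∀ j, |p.fst j| ≤ M}

theorem isClosed_separatedConfig (M ρ : ℝ) : IsClosed (separatedConfig d M ρ) := by
  simp only [separatedConfig, Set.ofPred_and, Set.ofPred_forall, ← ampL_apply, ← nodeL_apply]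
  refine .inter (isClosed_iInter fun j => isClosed_Icc.preimage (by fun_prop)) (.inter ?_ ?_)
  · exact isClosed_iInter fun i => isClosed_iInter fun j => isClosed_iInter fun _ =>
      isClosed_le continuous_const (by fun_prop)
  · exact isClosed_iInter fun j => isClosed_le (by fun_prop) continuous_const

theorem isCompact_separatedConfig (M ρ : ℝ) : IsCompact (separatedConfig d M ρ) := by
  let e : (Pt d) ≃L[ℝ] (Fin d → ℝ) × (Fin d → ℝ) :=
    (WithLp.prodContinuousLinearEquiv 2 ℝ _ _).trans
      ((EuclideanSpace.equiv (Fin d) ℝ).prodCongr (EuclideanSpace.equiv (Fin d) ℝ))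
  have hball : IsCompact (e ⁻¹' Metric.closedBall 0 (max M 1)) :=
    e.toHomeomorph.isCompact_preimage.mpr (isCompact_closedBall 0 _)
  refine hball.of_isClosed_subset (isClosed_separatedConfig M ρ) fun p ⟨hX, _, hA⟩ => ?_
  rw [Set.mem_preimage, mem_closedBall_zero_iff, norm_prod_le_iff,
    pi_norm_le_iff_of_nonneg (by positivity), pi_norm_le_iff_of_nonneg (by positivity)]
  refine ⟨fun j => (hA j).trans (le_max_left _ _), fun j => ?_⟩
  have hXj : |p.snd j| ≤ 1 := abs_le.mpr ⟨by linarith [(hX j).1], by linarith [(hX j).2]⟩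
  exact hXj.trans (le_max_right _ _)

end Prony

theorem prony_preimage_line_angle_general (m M ρ : ℝ) (d : ℕ)
    (hρ : 0 < ρ) :
    ∃ c > (0 : ℝ),
      ∀ A0 X0 : EuclideanSpace ℝ (Fin d),
        (∀ j, X0 j ∈ Set.Icc (-(1 / 2) : ℝ) (1 / 2)) →
        (∀ i j : Fin d, i ≠ j → ρ ≤ |X0 i - X0 j|) →
        (∀ j, m ≤ |A0 j| ∧ |A0 j| ≤ M) →
        ∀ J : WithLp 2 (EuclideanSpace ℝ (Fin d) × EuclideanSpace ℝ (Fin d)) ≃L[ℝ]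
            EuclideanSpace ℝ (Fin (2 * d)),
          (J : WithLp 2 (EuclideanSpace ℝ (Fin d) × EuclideanSpace ℝ (Fin d)) →L[ℝ]
              EuclideanSpace ℝ (Fin (2 * d))) =
            fderiv ℝ (Prony d) ((WithLp.equiv 2 _).symm (A0, X0)) →
          ∀ μ : EuclideanSpace ℝ (Fin (2 * d)),
            (∀ k : Fin (2 * d), (k : ℕ) ≠ 2 * d - 1 → μ k = 0) →
            μ ≠ 0 →
            (WithLp.equiv 2 _ (J.symm μ)).2 ≠ 0 ∧
            c * ‖J.symm μ‖ ≤ ‖(WithLp.equiv 2 _ (J.symm μ)).2‖ := by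
  obtain ⟨c, hc, hbound⟩ :=
    (Prony.isCompact_separatedConfig (d := d) M ρ).exists_pos_forall_mul_norm_le
      Prony.continuous_jacobian_apply (lastCoordAxis (2 * d)).closed_of_finiteDimensional
      (WithLp.sndL 2 ℝ _ _) fun p ⟨_, hsep, _⟩ v hv hvX =>
        Prony.eq_zero_of_jacobian_apply_eq_zero (injective_of_le_abs_sub hρ hsep)
          (fun k hk => mem_lastCoordAxis.mp hv k (by omega)) hvX
  refine ⟨c, hc, fun A0 X0 hX hsep hA J hJ μ hμ hμ0 => ?_⟩
  set p0 := (WithLp.equiv 2 _).symm (A0, X0)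
  have hJp : (J : _ →L[ℝ] _) = Prony.jacobian p0 := by rw [hJ, Prony.fderiv_eq_jacobian]
  have hv : Prony.jacobian p0 (J.symm μ) ∈ lastCoordAxis (2 * d) := by
    rw [← hJp, mem_lastCoordAxis]
    simpa using hμ
  have hle := hbound p0 ⟨hX, hsep, fun j => (hA j).2⟩ (J.symm μ) hv
  have hpos : 0 < c * ‖J.symm μ‖ := mul_pos hc (norm_pos_iff.mpr (by simpa using hμ0))
  exact ⟨fun hvX => hpos.not_ge (hle.trans_eq ((congrArg norm hvX).trans norm_zero)), hle⟩

/-- at a point `(A⁰, X⁰)` with nodes in `[−1/2, 1/2]` pairwise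
`ρ`-separated and amplitudes in `[m, M]` in absolute value, the preimage line
`JPM⁻¹(L)` of the last coordinate axis `L` under the Jacobian
`JPM = D PM(A⁰,X⁰)` is not contained in the amplitude subspace `ℝ^d × {0}`;
moreover, its angle `θ` with this subspace (given by `sin θ = ‖v_X‖/‖v‖`) is
bounded below by a positive constant `c` depending only on `m, M, d, ρ`:
`‖(JPM⁻¹ μ)_X‖ ≥ c ‖JPM⁻¹ μ‖` for every nonzero `μ ∈ L`. -/
theorem prony_preimage_line_angle (m M ρ : ℝ) (d : ℕ)
    (hm : 0 < m) (hmM : m ≤ M) (hd : 1 ≤ d) (hρ : 0 < ρ) :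
    ∃ c > (0 : ℝ),
      ∀ A0 X0 : EuclideanSpace ℝ (Fin d),
        (∀ j, X0 j ∈ Set.Icc (-(1 / 2) : ℝ) (1 / 2)) →
        (∀ i j : Fin d, i ≠ j → ρ ≤ |X0 i - X0 j|) →
        (∀ j, m ≤ |A0 j| ∧ |A0 j| ≤ M) →
        ∀ J : WithLp 2 (EuclideanSpace ℝ (Fin d) × EuclideanSpace ℝ (Fin d)) ≃L[ℝ]
            EuclideanSpace ℝ (Fin (2 * d)),
          (J : WithLp 2 (EuclideanSpace ℝ (Fin d) × EuclideanSpace ℝ (Fin d)) →L[ℝ]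
              EuclideanSpace ℝ (Fin (2 * d))) =
            fderiv ℝ (Prony d) ((WithLp.equiv 2 _).symm (A0, X0)) →
          ∀ μ : EuclideanSpace ℝ (Fin (2 * d)),
            (∀ k : Fin (2 * d), (k : ℕ) ≠ 2 * d - 1 → μ k = 0) →
            μ ≠ 0 →
            (WithLp.equiv 2 _ (J.symm μ)).2 ≠ 0 ∧
            c * ‖J.symm μ‖ ≤ ‖(WithLp.equiv 2 _ (J.symm μ)).2‖ :=
  prony_preimage_line_angle_general m M ρ d hρ
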